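/- arXiv:2512.08279 — 6 statements merged into one kernel-verified Lean document; each statement's English description precedes it below -/
import Mathlib

section
/- Let n ≥ 1, and for each multi-index v ∈ {0,1,2,3}^n let P_v ∈ M_{2^n}(ℂ) be the n-qubit Pauli operator given by the Kronecker product, according to v, of the 2×2 matrices σ_0 = I, σ_1 = X, σ_2 = Y, σ_3 = Z. Let γ : {0,1,2,3}^n \ {(0,…,0)} → [0,∞) and let L be the fully dissipative Pauli Lindbladian on M_{2^n}(ℂ) defined by L(ρ) = Σ_{v ≠ 0} γ_v (P_v ρ P_v − ρ). Then L is quantum programmable: there exist d_P ≥ 1, a quantum channel P : M_{2^n}(ℂ) ⊗ M_{d_P}(ℂ) → M_{2^n}(ℂ), and a continuous family of density matrices (π_t)_{t≥0} in M_{d_P}(ℂ) such that P(X ⊗ π_t) = e^{tL}(X) for all X ∈ M_{2^n}(ℂ) and all t ≥ 0. -/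
open scoped Kronecker ComplexOrder Matrix

noncomputable section

/-- The Choi matrix of a linear map between matrix algebras. -/
def choi {ι κ : Type*} [Fintype ι] [DecidableEq ι] [Fintype κ]
    (E : Matrix ι ι ℂ →ₗ[ℂ] Matrix κ κ ℂ) : Matrix (ι × κ) (ι × κ) ℂ :=
  ∑ i : ι, ∑ j : ι, Matrix.single i j (1 : ℂ) ⊗ₖ E (Matrix.single i j 1)

/-- A quantum channel: completely positive (positive semidefinite Choi matrix) and
trace preserving. -/
def IsCPTP {ι κ : Type*} [Fintype ι] [DecidableEq ι] [Fintype κ]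
    (E : Matrix ι ι ℂ →ₗ[ℂ] Matrix κ κ ℂ) : Prop :=
  (choi E).PosSemidef ∧ ∀ X, (E X).trace = X.trace

/-- A density matrix: positive semidefinite with unit trace. -/
def IsDensityMatrix {ι : Type*} [Fintype ι] (ρ : Matrix ι ι ℂ) : Prop :=
  ρ.PosSemidef ∧ ρ.trace = 1

/-- The exponential `e^L` of a superoperator `L`, taken in the algebra of linear
endomorphisms of the matrix space (computed via the matrix exponential in the
standard basis of the matrix space). -/
def expL {ι : Type*} [Fintype ι] [DecidableEq ι]
    (L : Matrix ι ι ℂ →ₗ[ℂ] Matrix ι ι ℂ) : Matrix ι ι ℂ →ₗ[ℂ] Matrix ι ι ℂ :=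
  Matrix.toLin (Matrix.stdBasis ℂ ι ι) (Matrix.stdBasis ℂ ι ι)
    (NormedSpace.exp (LinearMap.toMatrix (Matrix.stdBasis ℂ ι ι) (Matrix.stdBasis ℂ ι ι) L))

/-- A Lindbladian: `L(ρ) = -i[H,ρ] + Σ_j γ_j (A_j ρ A_j† - ½{A_j†A_j, ρ})` with `H`
Hermitian and rates `γ_j ≥ 0`. -/
def IsLindbladian {ι : Type*} [Fintype ι] [DecidableEq ι]
    (L : Matrix ι ι ℂ →ₗ[ℂ] Matrix ι ι ℂ) : Prop :=
  ∃ (J : ℕ) (H : Matrix ι ι ℂ) (γ : Fin J → ℝ) (A : Fin J → Matrix ι ι ℂ),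
    H.IsHermitian ∧ (∀ j, 0 ≤ γ j) ∧
    ∀ ρ, L ρ = -(Complex.I) • (H * ρ - ρ * H) +
      ∑ j, (γ j : ℂ) •
        (A j * ρ * (A j)ᴴ - (2⁻¹ : ℂ) • ((A j)ᴴ * A j * ρ + ρ * ((A j)ᴴ * A j)))

/-- `L` is quantum programmable: there are a finite-dimensional program register, a fixed
quantum channel `P`, and a continuous family of program (density) states `π t` such that
`P (X ⊗ π t) = e^{tL} X` for all `t ≥ 0`. -/
def QuantumProgrammable {ι : Type*} [Fintype ι] [DecidableEq ι]
    (L : Matrix ι ι ℂ →ₗ[ℂ] Matrix ι ι ℂ) : Prop :=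
  ∃ dP : ℕ, 1 ≤ dP ∧
    ∃ (P : Matrix (ι × Fin dP) (ι × Fin dP) ℂ →ₗ[ℂ] Matrix ι ι ℂ)
      (π : ℝ → Matrix (Fin dP) (Fin dP) ℂ),
      IsCPTP P ∧ ContinuousOn π (Set.Ici 0) ∧
      (∀ t : ℝ, 0 ≤ t → IsDensityMatrix (π t)) ∧
      ∀ t : ℝ, 0 ≤ t → ∀ X, P (X ⊗ₖ π t) = expL ((t : ℂ) • L) X

/-- The single-qubit Pauli matrices `σ_0 = I, σ_1 = X, σ_2 = Y, σ_3 = Z`. -/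
def pauli : Fin 4 → Matrix (Fin 2) (Fin 2) ℂ
  | 0 => !![1, 0; 0, 1]
  | 1 => !![0, 1; 1, 0]
  | 2 => !![0, -Complex.I; Complex.I, 0]
  | 3 => !![1, 0; 0, -1]

/-- The `n`-qubit Pauli operator `P_v = σ_{v 0} ⊗ ⋯ ⊗ σ_{v (n-1)}` (Kronecker product,
realized on the index type `Fin n → Fin 2` of `n`-bit strings). -/
def pauliN {n : ℕ} (v : Fin n → Fin 4) : Matrix (Fin n → Fin 2) (Fin n → Fin 2) ℂ :=
  Matrix.of fun x y => ∏ i, pauli (v i) (x i) (y i)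

def epsInt (a b : Fin 4) : ℤ := if a = 0 ∨ b = 0 ∨ a = b then 1 else -1

lemma pauli_mul_self (a : Fin 4) : pauli a * pauli a = 1 := by
  fin_cases a <;>
    simp [pauli, Matrix.mul_fin_two, Matrix.one_fin_two, Complex.I_mul_I] <;> ring_nf <;>
    simp [Complex.I_sq]

lemma pauli_triple (a b : Fin 4) :
    pauli a * pauli b * pauli a = (epsInt a b : ℂ) • pauli b := by
  fin_cases a <;> fin_cases b <;>
    simp [pauli, epsInt, Matrix.mul_fin_two, Matrix.smul_of, Complex.I_mul_I] <;>
    ext i j <;> fin_cases i <;> fin_cases j <;> simp <;> ring_nf <;> simp [Complex.I_sq] <;> ring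

lemma pauli_star_apply (a : Fin 4) (x y : Fin 2) :
    star (pauli a x y) = pauli a y x := by
  fin_cases a <;> fin_cases x <;> fin_cases y <;> simp [pauli]

/-- entrywise Kronecker product of a family of 2×2 matrices -/
def kron {n : ℕ} (f : Fin n → Matrix (Fin 2) (Fin 2) ℂ) :
    Matrix (Fin n → Fin 2) (Fin n → Fin 2) ℂ :=
  Matrix.of fun x y => ∏ i, f i (x i) (y i)

lemma pauliN_eq_kron {n : ℕ} (v : Fin n → Fin 4) : pauliN v = kron (fun i => pauli (v i)) := rfl

lemma kron_mul {n : ℕ} (f g : Fin n → Matrix (Fin 2) (Fin 2) ℂ) :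
    kron f * kron g = kron (fun i => f i * g i) := by
  ext x y
  simp only [Matrix.mul_apply, kron, Matrix.of_apply, ← Finset.prod_mul_distrib]
  rw [← Fintype.piFinset_univ]
  exact (Finset.prod_univ_sum (fun _ => (Finset.univ : Finset (Fin 2)))
    (fun i j => f i (x i) j * g i j (y i))).symm

lemma kron_one {n : ℕ} : kron (fun _ : Fin n => (1 : Matrix (Fin 2) (Fin 2) ℂ)) = 1 := by
  ext x y
  simp only [kron, Matrix.of_apply, Matrix.one_apply]
  by_cases h : x = y
  · subst h; simp
  · obtain ⟨i, hi⟩ := Function.ne_iff.mp h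
    rw [if_neg h]
    exact Finset.prod_eq_zero (Finset.mem_univ i) (by simp [Matrix.one_apply, hi])

lemma kron_smul {n : ℕ} (c : Fin n → ℂ) (f : Fin n → Matrix (Fin 2) (Fin 2) ℂ) :
    kron (fun i => c i • f i) = (∏ i, c i) • kron f := by
  ext x y
  simp [kron, Finset.prod_mul_distrib]

def epsN {n : ℕ} (v u : Fin n → Fin 4) : ℤ := ∏ i, epsInt (v i) (u i)

lemma epsN_sq {n : ℕ} (v u : Fin n → Fin 4) : epsN v u = 1 ∨ epsN v u = -1 := by
  refine Finset.prod_induction _ (fun z => z = 1 ∨ z = -1) ?_ (Or.inl rfl) ?_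
  · rintro a b (rfl | rfl) (rfl | rfl) <;> simp
  · intro i _
    unfold epsInt; split <;> simp

lemma pauliN_mul_self {n : ℕ} (v : Fin n → Fin 4) : pauliN v * pauliN v = 1 := by
  rw [pauliN_eq_kron, kron_mul]
  simp only [pauli_mul_self]
  exact kron_one

lemma pauliN_triple {n : ℕ} (v u : Fin n → Fin 4) :
    pauliN v * pauliN u * pauliN v = (epsN v u : ℂ) • pauliN u := by
  rw [pauliN_eq_kron, pauliN_eq_kron, kron_mul, kron_mul]
  simp only [pauli_triple]
  rw [show (fun i => (epsInt (v i) (u i) : ℂ) • pauli (u i)) =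
    (fun i => ((epsInt (v i) (u i) : ℂ)) • (fun j => pauli (u j)) i) from rfl, kron_smul]
  unfold epsN
  push_cast
  rfl

lemma pauliN_star_apply {n : ℕ} (v : Fin n → Fin 4) (x y : Fin n → Fin 2) :
    star (pauliN v x y) = pauliN v y x := by
  simp only [pauliN, Matrix.of_apply, star_prod, pauli_star_apply]

lemma pauli_complete (a b x y : Fin 2) :
    ∑ s : Fin 4, pauli s a b * pauli s x y
      = 2 * ((if a = y then 1 else 0) * (if b = x then 1 else 0)) := by
  fin_cases a <;> fin_cases b <;> fin_cases x <;> fin_cases y <;>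
    simp [Fin.sum_univ_four, pauli] <;> ring_nf <;> simp [Complex.I_sq] <;> ring

lemma pauliN_complete {n : ℕ} (a b x y : Fin n → Fin 2) :
    ∑ u : Fin n → Fin 4, pauliN u a b * pauliN u x y
      = (2 ^ n : ℂ) * ((if a = y then 1 else 0) * (if b = x then 1 else 0)) := by
  simp only [pauliN, Matrix.of_apply, ← Finset.prod_mul_distrib]
  rw [← Fintype.piFinset_univ,
    ← Finset.prod_univ_sum (fun _ => (Finset.univ : Finset (Fin 4)))
      (fun i s => pauli s (a i) (b i) * pauli s (x i) (y i))]
  simp only [pauli_complete]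
  rw [Finset.prod_mul_distrib]
  congr 1
  · simp
  rw [Finset.prod_mul_distrib]
  congr 1
  · by_cases h : a = y
    · subst h; simp
    · obtain ⟨i, hi⟩ := Function.ne_iff.mp h
      rw [if_neg h]
      exact Finset.prod_eq_zero (Finset.mem_univ i) (by simp [hi])
  · by_cases h : b = x
    · subst h; simp
    · obtain ⟨i, hi⟩ := Function.ne_iff.mp h
      rw [if_neg h]
      exact Finset.prod_eq_zero (Finset.mem_univ i) (by simp [hi])

lemma pauliN_expand {n : ℕ} (X : Matrix (Fin n → Fin 2) (Fin n → Fin 2) ℂ) :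
    ∑ u : Fin n → Fin 4, (pauliN u * X).trace • pauliN u = (2 ^ n : ℂ) • X := by
  ext x y
  have key : ∀ a b, ∑ u : Fin n → Fin 4, pauliN u a b * X b a * pauliN u x y
      = X b a * ((2 ^ n : ℂ) * ((if a = y then 1 else 0) * (if b = x then 1 else 0))) := by
    intro a b
    rw [← pauliN_complete a b x y, Finset.mul_sum]
    exact Finset.sum_congr rfl fun u _ => by ring
  have lhs : (∑ u : Fin n → Fin 4, (pauliN u * X).trace • pauliN u) x y
      = ∑ u : Fin n → Fin 4, ∑ a, ∑ b, pauliN u a b * X b a * pauliN u x y := by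
    simp only [Matrix.sum_apply, Matrix.smul_apply, smul_eq_mul, Matrix.trace,
      Matrix.diag, Matrix.mul_apply, Finset.sum_mul]
  rw [lhs, Finset.sum_comm]
  have : ∀ a, ∑ u : Fin n → Fin 4, ∑ b, pauliN u a b * X b a * pauliN u x y
      = ∑ b, ∑ u : Fin n → Fin 4, pauliN u a b * X b a * pauliN u x y :=
    fun a => Finset.sum_comm
  simp only [this, key, Matrix.smul_apply, smul_eq_mul]
  simp [Finset.sum_ite_eq', mul_comm]

def e2 : Fin 4 → ZMod 2 × ZMod 2
  | 0 => (0,0) | 1 => (1,0) | 2 => (1,1) | 3 => (0,1)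

def d2 (x : ZMod 2 × ZMod 2) : Fin 4 :=
  if x = (0,0) then 0 else if x = (1,0) then 1 else if x = (1,1) then 2 else 3

lemma d2_e2 : ∀ a, d2 (e2 a) = a := by decide

lemma epsInt_d2_add : ∀ (x y : ZMod 2 × ZMod 2) (c : Fin 4),
    epsInt (d2 (x + y)) c = epsInt (d2 x) c * epsInt (d2 y) c := by decide

lemma epsInt_d2_zero : ∀ c, epsInt (d2 0) c = 1 := by decide

def sig {n : ℕ} (S : Finset (Fin n → Fin 4)) : Fin n → Fin 4 :=
  fun i => d2 (∑ v ∈ S, e2 (v i))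

lemma epsN_sig {n : ℕ} (S : Finset (Fin n → Fin 4)) (u : Fin n → Fin 4) :
    epsN (sig S) u = ∏ v ∈ S, epsN v u := by
  have key : ∀ (i : Fin n), epsInt (sig S i) (u i) = ∏ v ∈ S, epsInt (v i) (u i) := by
    intro i
    unfold sig
    induction S using Finset.induction with
    | empty => simpa using epsInt_d2_zero (u i)
    | insert _ _ h ih =>
        rw [Finset.sum_insert h, epsInt_d2_add, d2_e2, Finset.prod_insert h, ih]
  unfold epsN
  simp only [key]
  exact Finset.prod_comm

section prob
variable {n : ℕ} (γ : (Fin n → Fin 4) → ℝ) (t : ℝ)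

def VV (n : ℕ) : Finset (Fin n → Fin 4) := Finset.univ.filter (fun v => v ≠ 0)

def aa (v : Fin n → Fin 4) : ℝ := (1 + Real.exp (-(2 * t * γ v))) / 2
def bb (v : Fin n → Fin 4) : ℝ := (1 - Real.exp (-(2 * t * γ v))) / 2

def pw (w : Fin n → Fin 4) : ℝ :=
  ∑ S ∈ (VV n).powerset,
    if sig S = w then (∏ v ∈ S, bb γ t v) * (∏ v ∈ (VV n) \ S, aa γ t v) else 0

lemma aa_nonneg (v) : 0 ≤ aa γ t v := by
  have := Real.exp_pos (-(2 * t * γ v)); unfold aa; linarith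

lemma bb_nonneg (ht : 0 ≤ t) (hγ : ∀ v, 0 ≤ γ v) (v) : 0 ≤ bb γ t v := by
  have h1 : Real.exp (-(2 * t * γ v)) ≤ 1 := by
    rw [Real.exp_le_one_iff]
    have := mul_nonneg (mul_nonneg (by norm_num : (0:ℝ) ≤ 2) ht) (hγ v)
    linarith
  unfold bb; linarith

lemma aa_add_bb (v) : bb γ t v + aa γ t v = 1 := by unfold aa bb; ring

lemma pw_nonneg (ht : 0 ≤ t) (hγ : ∀ v, 0 ≤ γ v) (w) : 0 ≤ pw γ t w := by
  refine Finset.sum_nonneg fun S _ => ?_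
  split
  · exact mul_nonneg (Finset.prod_nonneg fun v _ => bb_nonneg γ t ht hγ v)
      (Finset.prod_nonneg fun v _ => aa_nonneg γ t v)
  · exact le_refl 0

lemma pw_sum : ∑ w : Fin n → Fin 4, pw γ t w = 1 := by
  unfold pw
  rw [Finset.sum_comm]
  have : ∀ S ∈ (VV n).powerset, (∑ w : Fin n → Fin 4,
      if sig S = w then (∏ v ∈ S, bb γ t v) * (∏ v ∈ (VV n) \ S, aa γ t v) else 0)
      = (∏ v ∈ S, bb γ t v) * (∏ v ∈ (VV n) \ S, aa γ t v) := by
    intro S _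
    rw [Finset.sum_ite_eq (Finset.univ) (sig S)]
    simp
  rw [Finset.sum_congr rfl this, ← Finset.prod_add]
  rw [Finset.prod_congr rfl (fun v _ => aa_add_bb γ t v), Finset.prod_const_one]

lemma pw_fourier (u : Fin n → Fin 4) :
    ∑ w : Fin n → Fin 4, pw γ t w * ((epsN w u : ℤ) : ℝ)
      = Real.exp (t * ∑ v ∈ VV n, γ v * (((epsN v u : ℤ) : ℝ) - 1)) := by
  unfold pw
  simp only [Finset.sum_mul]
  rw [Finset.sum_comm]
  have step1 : ∀ S ∈ (VV n).powerset, (∑ w : Fin n → Fin 4,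
      (if sig S = w then (∏ v ∈ S, bb γ t v) * (∏ v ∈ (VV n) \ S, aa γ t v) else 0)
        * ((epsN w u : ℤ) : ℝ))
      = (∏ v ∈ S, bb γ t v * ((epsN v u : ℤ) : ℝ)) * (∏ v ∈ (VV n) \ S, aa γ t v) := by
    intro S _
    simp only [ite_mul, zero_mul]
    rw [Finset.sum_ite_eq (Finset.univ) (sig S)]
    simp only [Finset.mem_univ, if_true]
    rw [epsN_sig]
    push_cast
    rw [Finset.prod_mul_distrib]
    ring
  rw [Finset.sum_congr rfl step1, ← Finset.prod_add, mul_comm t, Finset.sum_mul,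
    Real.exp_sum]
  refine Finset.prod_congr rfl fun v _ => ?_
  rcases epsN_sq v u with h | h <;> rw [h] <;> unfold aa bb <;> push_cast <;> ring_nf <;>
    rw [Real.exp_zero] <;> try rw [show γ v * t * (-2) = -(2 * t * γ v) by ring]


end prob

section eigen
variable {κ : Type*} [Fintype κ] [DecidableEq κ]

attribute [local instance] Matrix.linftyOpNormedAddCommGroup Matrix.linftyOpNormedRing
  Matrix.linftyOpNormedSpace Matrix.linftyOpNormedAlgebra

lemma exp_mulVec_eigen (M : Matrix κ κ ℂ) (x : κ → ℂ) (c : ℂ) (h : M *ᵥ x = c • x) :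
    (NormedSpace.exp M) *ᵥ x = Complex.exp c • x := by
  have hpow : ∀ k : ℕ, (M ^ k) *ᵥ x = (c ^ k) • x := by
    intro k
    induction k with
    | zero => simp
    | succ k ih =>
        rw [pow_succ, ← Matrix.mulVec_mulVec, h, Matrix.mulVec_smul, ih, pow_succ]
        rw [smul_smul, mul_comm]
  let flin : Matrix κ κ ℂ →ₗ[ℂ] (κ → ℂ) :=
    { toFun := fun A => A *ᵥ x
      map_add' := fun A B => Matrix.add_mulVec A B x
      map_smul' := fun c A => Matrix.smul_mulVec c A x }
  let f : Matrix κ κ ℂ →L[ℂ] (κ → ℂ) := LinearMap.toContinuousLinearMap flin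
  have hf : ∀ A, f A = A *ᵥ x := fun A => rfl
  rw [show (NormedSpace.exp M) *ᵥ x = f (NormedSpace.exp M) from rfl]
  rw [NormedSpace.exp_eq_tsum (𝕂 := ℂ)]
  rw [f.map_tsum (NormedSpace.expSeries_summable' (𝕂 := ℂ) M)]
  have : ∀ k : ℕ, f ((k.factorial⁻¹ : ℂ) • M ^ k) = ((k.factorial⁻¹ : ℂ) * c ^ k) • x := by
    intro k
    rw [map_smul, hf, hpow, smul_smul]
  rw [tsum_congr this, Summable.tsum_smul_const ?hs x, Complex.exp_eq_exp_ℂ, NormedSpace.exp_eq_tsum (𝕂 := ℂ)]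
  · simp [smul_eq_mul]
  case hs =>
    simpa [smul_eq_mul] using NormedSpace.expSeries_summable' (𝕂 := ℂ) c

end eigen


section chan
variable {n : ℕ}

def enc (n : ℕ) : (Fin n → Fin 4) ≃ Fin (4 ^ n) := finFunctionFinEquiv

def Kop {n : ℕ} (w : Fin n → Fin 4) :
    Matrix (Fin n → Fin 2) ((Fin n → Fin 2) × Fin (4 ^ n)) ℂ :=
  Matrix.of fun x p => pauliN w x p.1 * (if p.2 = enc n w then 1 else 0)

def Pmap (n : ℕ) :
    Matrix ((Fin n → Fin 2) × Fin (4 ^ n)) ((Fin n → Fin 2) × Fin (4 ^ n)) ℂ →ₗ[ℂ]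
      Matrix (Fin n → Fin 2) (Fin n → Fin 2) ℂ where
  toFun := fun Y => ∑ w : Fin n → Fin 4, Kop w * Y * (Kop w)ᴴ
  map_add' := by
    intro Y Z
    simp [Matrix.mul_add, Matrix.add_mul, Finset.sum_add_distrib]
  map_smul' := by
    intro c Y
    simp [Matrix.mul_smul, Matrix.smul_mul, Finset.smul_sum]

lemma choi_apply {ι κ : Type*} [Fintype ι] [DecidableEq ι] [Fintype κ]
    (E : Matrix ι ι ℂ →ₗ[ℂ] Matrix κ κ ℂ) (p q : ι × κ) :
    choi E p q = E (Matrix.single p.1 q.1 1) p.2 q.2 := by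
  obtain ⟨a, k⟩ := p; obtain ⟨b, l⟩ := q
  simp only [choi, Matrix.sum_apply, Matrix.kroneckerMap_apply, Matrix.single,
    Matrix.of_apply, ite_and]
  rw [Finset.sum_comm]
  simp [Finset.sum_ite_eq, Finset.sum_ite_eq']

lemma psd_outer {m : Type*} [Fintype m] (v : m → ℂ) :
    (Matrix.of fun i j => v i * star (v j)).PosSemidef := by
  have : (Matrix.of fun i j => v i * star (v j)) =
      (Matrix.of fun (_ : Unit) j => star (v j))ᴴ * (Matrix.of fun (_ : Unit) j => star (v j)) := by
    ext i j
    simp [Matrix.mul_apply, Matrix.conjTranspose_apply, mul_comm]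
  rw [this]
  exact Matrix.posSemidef_conjTranspose_mul_self _

lemma sand {κ ι : Type*} [Fintype ι] [DecidableEq ι] [Fintype κ]
    (A : Matrix κ ι ℂ) (a b : ι) (k l : κ) :
    (A * Matrix.single a b (1:ℂ) * Aᴴ) k l = A k a * star (A l b) := by
  simp only [Matrix.mul_apply, Matrix.conjTranspose_apply, Matrix.single,
    Matrix.of_apply, ite_and, mul_ite, ite_mul, mul_zero, zero_mul, mul_one]
  simp [Finset.sum_ite_eq, ite_mul, zero_mul]

lemma Kop_sum (n : ℕ) : ∑ w : Fin n → Fin 4, (Kop w)ᴴ * Kop w = 1 := by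
  ext p q
  obtain ⟨p1, p2⟩ := p; obtain ⟨q1, q2⟩ := q
  simp only [Matrix.sum_apply, Matrix.mul_apply, Matrix.conjTranspose_apply, Kop,
    Matrix.of_apply]
  have hterm : ∀ w : Fin n → Fin 4, (∑ x, star (pauliN w x p1 * (if p2 = enc n w then 1 else 0)) *
      (pauliN w x q1 * (if q2 = enc n w then 1 else 0)))
      = ((if p2 = enc n w then 1 else 0) * (if q2 = enc n w then 1 else 0))
          * (1 : Matrix (Fin n → Fin 2) (Fin n → Fin 2) ℂ) p1 q1 := by
    intro w
    have h1 : ∀ x, star (pauliN w x p1 * (if p2 = enc n w then 1 else 0)) *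
        (pauliN w x q1 * (if q2 = enc n w then 1 else 0))
        = ((if p2 = enc n w then 1 else 0) * (if q2 = enc n w then 1 else 0))
            * (pauliN w p1 x * pauliN w x q1) := by
      intro x
      rw [star_mul', pauliN_star_apply]
      split <;> split <;> simp <;> ring
    rw [Finset.sum_congr rfl (fun x _ => h1 x), ← Finset.mul_sum, ← Matrix.mul_apply,
      pauliN_mul_self]
  rw [Finset.sum_congr rfl (fun w _ => hterm w), ← Equiv.sum_comp (enc n).symm]
  simp only [Equiv.apply_symm_apply]
  by_cases h : p2 = q2
  · subst h
    simp [Finset.sum_ite_eq, Matrix.one_apply, Prod.ext_iff]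
  · have : ∀ k : Fin (4 ^ n), ((if p2 = k then (1:ℂ) else 0) * (if q2 = k then 1 else 0))
        * (1 : Matrix (Fin n → Fin 2) (Fin n → Fin 2) ℂ) p1 q1 = 0 := by
      intro k
      by_cases h1 : q2 = k
      · by_cases h2 : p2 = k
        · exact absurd (h2.trans h1.symm) h
        · rw [if_neg h2]; ring
      · rw [if_neg h1]; ring
    rw [Finset.sum_congr rfl (fun k _ => this k)]
    simp [Matrix.one_apply, Prod.ext_iff, h]

lemma Pmap_cptp (n : ℕ) : IsCPTP (Pmap n) := by
  constructor
  · have hch : choi (Pmap n) = ∑ w : Fin n → Fin 4,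
        Matrix.of (fun p q : ((Fin n → Fin 2) × Fin (4 ^ n)) × (Fin n → Fin 2) =>
          (fun r : ((Fin n → Fin 2) × Fin (4 ^ n)) × (Fin n → Fin 2) => Kop w r.2 r.1) p *
            star ((fun r : ((Fin n → Fin 2) × Fin (4 ^ n)) × (Fin n → Fin 2) => Kop w r.2 r.1) q)) := by
      ext p q
      rw [choi_apply]
      simp only [Pmap, LinearMap.coe_mk, AddHom.coe_mk, Matrix.sum_apply, Matrix.of_apply]
      exact Finset.sum_congr rfl fun w _ => sand (Kop w) p.1 q.1 p.2 q.2
    rw [hch]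
    refine Finset.sum_induction _ Matrix.PosSemidef (fun A B hA hB => hA.add hB)
      ⟨Matrix.isHermitian_zero, fun x => by simp⟩ (fun w _ => psd_outer _)
  · intro Y
    simp only [Pmap, LinearMap.coe_mk, AddHom.coe_mk]
    rw [Matrix.trace_sum]
    have : ∀ w : Fin n → Fin 4, (Kop w * Y * (Kop w)ᴴ).trace = ((Kop w)ᴴ * Kop w * Y).trace := by
      intro w
      rw [Matrix.trace_mul_cycle, Matrix.mul_assoc]
    rw [Finset.sum_congr rfl (fun w _ => this w), ← Matrix.trace_sum, ← Finset.sum_mul,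
      Kop_sum, Matrix.one_mul]

end chan

lemma Pmap_apply_kron (n : ℕ) (X : Matrix (Fin n → Fin 2) (Fin n → Fin 2) ℂ)
    (d : Fin (4 ^ n) → ℂ) :
    Pmap n (X ⊗ₖ Matrix.diagonal d)
      = ∑ w : Fin n → Fin 4, d (enc n w) • (pauliN w * X * pauliN w) := by
  simp only [Pmap, LinearMap.coe_mk, AddHom.coe_mk]
  refine Finset.sum_congr rfl fun w _ => ?_
  ext x y
  simp only [Matrix.mul_apply, Matrix.conjTranspose_apply, Kop, Matrix.of_apply,
    Matrix.kroneckerMap_apply, Matrix.diagonal_apply, Fintype.sum_prod_type,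
    Matrix.smul_apply, smul_eq_mul, Finset.sum_mul, Finset.mul_sum]
  refine Finset.sum_congr rfl fun q1 _ => ?_
  simp only [star_mul', apply_ite star, star_one, star_zero, pauliN_star_apply, mul_ite, ite_mul,
    mul_zero, zero_mul, mul_one, one_mul]
  simp [Finset.sum_ite_eq, Finset.sum_ite_eq', Finset.mul_sum]
  refine Finset.sum_congr rfl fun p1 _ => ?_
  ring

lemma expL_eigen {ι : Type*} [Fintype ι] [DecidableEq ι]
    (L' : Matrix ι ι ℂ →ₗ[ℂ] Matrix ι ι ℂ) (X : Matrix ι ι ℂ) (c : ℂ)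
    (h : L' X = c • X) : expL L' X = Complex.exp c • X := by
  set b := Matrix.stdBasis ℂ ι ι with hb
  set M := LinearMap.toMatrix b b L' with hM
  have h1 : M *ᵥ ⇑(b.repr X) = c • ⇑(b.repr X) := by
    rw [hM, LinearMap.toMatrix_mulVec_repr, h, map_smul]
    rfl
  have h2 := exp_mulVec_eigen M (⇑(b.repr X)) c h1
  rw [expL, Matrix.toLin_apply, h2]
  simp only [Pi.smul_apply, smul_assoc]
  rw [← Finset.smul_sum]
  congr 1
  exact b.sum_repr X

lemma pw_continuous {n : ℕ} (γ : (Fin n → Fin 4) → ℝ) (w : Fin n → Fin 4) :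
    Continuous fun t => pw γ t w := by
  unfold pw
  apply continuous_finset_sum
  intro S _
  by_cases h : sig S = w
  · simp only [if_pos h]
    apply Continuous.mul <;> apply continuous_finset_prod <;> intro v _ <;>
      [unfold bb; unfold aa] <;> fun_prop
  · simp only [if_neg h]; exact continuous_const

lemma sum_kron_aux {n : ℕ} (f : (Fin n → Fin 4) → Matrix (Fin n → Fin 2) (Fin n → Fin 2) ℂ)
    (B : Matrix (Fin (4 ^ n)) (Fin (4 ^ n)) ℂ) :
    (∑ u : Fin n → Fin 4, f u) ⊗ₖ B = ∑ u : Fin n → Fin 4, (f u ⊗ₖ B) := by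
  ext p q
  simp [Matrix.kroneckerMap_apply, Matrix.sum_apply, Finset.sum_mul]

/-- any fully dissipative `n`-qubit Pauli Lindbladian
`L(ρ) = Σ_{v ≠ 0} γ_v (P_v ρ P_v − ρ)` is quantum programmable. -/
theorem pauli_lindbladian_quantum_programmable
    (n : ℕ) (hn : 1 ≤ n)
    (γ : (Fin n → Fin 4) → ℝ) (hγ : ∀ v, 0 ≤ γ v)
    (L : Matrix (Fin n → Fin 2) (Fin n → Fin 2) ℂ →ₗ[ℂ]
          Matrix (Fin n → Fin 2) (Fin n → Fin 2) ℂ)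
    (hL : ∀ ρ, L ρ =
        ∑ v ∈ Finset.univ.filter (fun v : Fin n → Fin 4 => v ≠ 0),
          (γ v : ℂ) • (pauliN v * ρ * pauliN v - ρ)) :
    QuantumProgrammable L := by
  classical
  set lam : (Fin n → Fin 4) → ℝ :=
    fun u => ∑ v ∈ VV n, γ v * (((epsN v u : ℤ) : ℝ) - 1) with hlam
  have hLeig : ∀ u, L (pauliN u) = ((lam u : ℝ) : ℂ) • pauliN u := by
    intro u
    rw [hL]
    have hterm : ∀ v ∈ VV n, (γ v : ℂ) • (pauliN v * pauliN u * pauliN v - pauliN u)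
        = ((γ v * (((epsN v u : ℤ) : ℝ) - 1) : ℝ) : ℂ) • pauliN u := by
      intro v _
      rw [pauliN_triple,
        show (epsN v u : ℂ) • pauliN u - pauliN u = ((epsN v u : ℂ) - 1) • pauliN u by
          rw [sub_smul, one_smul],
        smul_smul]
      congr 1
      push_cast
      ring
    rw [show Finset.univ.filter (fun v : Fin n → Fin 4 => v ≠ 0) = VV n from rfl,
      Finset.sum_congr rfl hterm, ← Finset.sum_smul]
    congr 1
    rw [hlam]
    push_cast
    ring
  refine ⟨4 ^ n, Nat.one_le_pow _ _ (by norm_num), Pmap n,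
    fun t => Matrix.diagonal (fun k => ((pw γ t ((enc n).symm k) : ℝ) : ℂ)),
    Pmap_cptp n, ?_, ?_, ?_⟩
  · apply Continuous.continuousOn
    apply continuous_matrix
    intro i j
    by_cases h : i = j
    · subst h
      simp only [Matrix.diagonal_apply_eq]
      exact Complex.continuous_ofReal.comp (pw_continuous γ _)
    · simp only [Matrix.diagonal_apply_ne _ h]
      exact continuous_const
  · intro t ht
    constructor
    · exact Matrix.PosSemidef.diagonal
        (fun k => Complex.zero_le_real.mpr (pw_nonneg γ t ht hγ _))
    · rw [Matrix.trace_diagonal]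
      rw [Equiv.sum_comp (enc n).symm (fun w => ((pw γ t w : ℝ) : ℂ))]
      rw [← Complex.ofReal_sum, pw_sum, Complex.ofReal_one]
  · intro t ht X
    have key1 : ∀ u, Pmap n (pauliN u ⊗ₖ
        Matrix.diagonal (fun k => ((pw γ t ((enc n).symm k) : ℝ) : ℂ)))
        = ((Real.exp (t * lam u) : ℝ) : ℂ) • pauliN u := by
      intro u
      rw [Pmap_apply_kron]
      simp only [Equiv.symm_apply_apply]
      have hterm : ∀ w ∈ (Finset.univ : Finset (Fin n → Fin 4)),
          ((pw γ t w : ℝ) : ℂ) • (pauliN w * pauliN u * pauliN w)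
          = ((pw γ t w * ((epsN w u : ℤ) : ℝ) : ℝ) : ℂ) • pauliN u := by
        intro w _
        rw [pauliN_triple, smul_smul]
        congr 1
        push_cast
        ring
      rw [Finset.sum_congr rfl hterm, ← Finset.sum_smul]
      congr 1
      rw [← Complex.ofReal_sum, pw_fourier γ t u]
    have key2 : ∀ u, expL ((t : ℂ) • L) (pauliN u)
        = ((Real.exp (t * lam u) : ℝ) : ℂ) • pauliN u := by
      intro u
      have heig : ((t : ℂ) • L) (pauliN u) = (((t * lam u : ℝ) : ℂ)) • pauliN u := by
        rw [LinearMap.smul_apply, hLeig, smul_smul]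
        congr 1
        push_cast
        ring
      rw [expL_eigen _ _ _ heig, Complex.ofReal_exp]
    have expand : X = (2 ^ n : ℂ)⁻¹ • ∑ u, (pauliN u * X).trace • pauliN u := by
      rw [pauliN_expand, inv_smul_smul₀ (by norm_num : (2 ^ n : ℂ) ≠ 0)]
    conv_lhs => rw [expand]
    conv_rhs => rw [expand]
    rw [Matrix.smul_kronecker, map_smul, map_smul, sum_kron_aux, map_sum, map_sum]
    congr 1
    refine Finset.sum_congr rfl fun u _ => ?_
    rw [Matrix.smul_kronecker, map_smul, map_smul, key1, key2]
end
end

section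
/- Let γ > 0 and let L : M_2(ℂ) → M_2(ℂ) be defined by L(ρ) = γ(⟨1|ρ|1⟩ |0⟩⟨0| − ½(|1⟩⟨1|ρ + ρ|1⟩⟨1|)) (the Lindbladian with single jump operator √γ |0⟩⟨1|). Then there exist no α ≥ 0 and quantum channel E : M_2(ℂ) → M_2(ℂ) such that L(ρ) = α(E(ρ) − ρ) for all ρ ∈ M_2(ℂ). -/
open scoped Kronecker ComplexOrder Matrix

noncomputable section

/-- the amplitude damping Lindbladian with jump operator `√γ |0⟩⟨1|`
cannot be written as `L(ρ) = α (E(ρ) − ρ)` with `α ≥ 0` and `E` a quantum channel. -/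
theorem spontaneous_emission_no_channel_form
    (γ : ℝ) (hγ : 0 < γ)
    (L : Matrix (Fin 2) (Fin 2) ℂ →ₗ[ℂ] Matrix (Fin 2) (Fin 2) ℂ)
    (hL : ∀ ρ : Matrix (Fin 2) (Fin 2) ℂ,
      L ρ = (γ : ℂ) • (ρ 1 1 • Matrix.single 0 0 (1 : ℂ) -
        (2⁻¹ : ℂ) • (Matrix.single 1 1 (1 : ℂ) * ρ +
          ρ * Matrix.single 1 1 (1 : ℂ)))) :
    ¬ ∃ (α : ℝ) (E : Matrix (Fin 2) (Fin 2) ℂ →ₗ[ℂ] Matrix (Fin 2) (Fin 2) ℂ),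
        0 ≤ α ∧ IsCPTP E ∧ ∀ ρ, L ρ = (α : ℂ) • (E ρ - ρ) := by
  rintro ⟨α, E, hα, ⟨hPSD, -⟩, h⟩
  rcases hα.eq_or_lt with rfl | hαpos
  · have h1 := (hL (Matrix.single 1 1 1)).symm.trans (h (Matrix.single 1 1 1))
    have h2 := congrFun (congrFun h1 0) 0
    simp [Matrix.mul_apply, Fin.sum_univ_succ, Matrix.single, Matrix.smul_apply,
      Matrix.sub_apply, Matrix.add_apply, Matrix.of_apply] at h2
    exact hγ.ne' h2
  · have hα0 : (α : ℂ) ≠ 0 := by exact_mod_cast hαpos.ne'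
    have hE : ∀ ρ, E ρ = ρ + (α : ℂ)⁻¹ • L ρ := by
      intro ρ
      rw [h ρ, smul_smul, inv_mul_cancel₀ hα0, one_smul]
      abel
    set v : Fin 2 × Fin 2 → ℂ :=
      fun p => if p = (0, 0) then ((γ / (2 * α) : ℝ) - 1 : ℂ)
        else if p = (1, 1) then 1 else 0 with hvdef
    have hv := hPSD.dotProduct_mulVec_nonneg v
    have key : star v ⬝ᵥ (choi E) *ᵥ v = ((-(γ / (2 * α)) ^ 2 : ℝ) : ℂ) := by
      simp only [choi, hE, hL, hvdef]
      simp [dotProduct, Matrix.mulVec, Fintype.sum_prod_type, Fin.sum_univ_succ,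
        Matrix.sum_apply, Matrix.kroneckerMap_apply, Matrix.add_apply, Matrix.smul_apply,
        Matrix.sub_apply, Matrix.mul_apply, Matrix.single, Matrix.of_apply,
        Pi.star_apply, Prod.ext_iff]
      field_simp
      ring
    rw [key] at hv
    have h2 : (0 : ℝ) ≤ -(γ / (2 * α)) ^ 2 := by exact_mod_cast hv
    nlinarith [sq_nonneg (γ / (2 * α)), div_pos hγ (by linarith : (0:ℝ) < 2 * α)]
end
end

section
/- Let E_1, …, E_k : M_d(ℂ) → M_d(ℂ) be linearly independent quantum channels, let L : M_d(ℂ) → M_d(ℂ) be linear, and let Q = (q_{ij}) ∈ M_k(ℝ) be a Q-matrix, i.e. q_{ij} ≥ 0 for i ≠ j and Σ_{i=1}^k q_{ij} = 0 for every column j. Assume that L ∘ E_i = Σ_{j=1}^k q_{ji} E_j for each i = 1, …, k, and that the identity map on M_d(ℂ) satisfies id = Σ_{j=1}^k λ_j E_j for some probability vector λ ∈ ℝ^k. Then for every t ≥ 0 the vector c(t) = e^{tQ} λ is a probability vector and e^{tL} = Σ_{j=1}^k c_j(t) E_j; in particular e^{tL} lies in the convex hull of {E_1, …, E_k} for all t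 ≥ 0. -/
open scoped Kronecker ComplexOrder Matrix

noncomputable section

open NormedSpace
open scoped Nat


lemma aux_pow_entries_nonneg {k : ℕ} {N : Matrix (Fin k) (Fin k) ℝ}
    (hN : ∀ i j, 0 ≤ N i j) : ∀ (n : ℕ) (i j : Fin k), 0 ≤ (N ^ n) i j := by
  intro n
  induction n with
  | zero =>
    intro i j
    rw [pow_zero, Matrix.one_apply]
    split <;> norm_num
  | succ n ih =>
    intro i j
    rw [pow_succ, Matrix.mul_apply]
    exact Finset.sum_nonneg fun l _ => mul_nonneg (ih i l) (hN l j)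

lemma aux_exp_entries_nonneg {k : ℕ} {N : Matrix (Fin k) (Fin k) ℝ}
    (hN : ∀ i j, 0 ≤ N i j) (i j : Fin k) : 0 ≤ exp N i j := by
  letI : SeminormedRing (Matrix (Fin k) (Fin k) ℝ) := Matrix.linftyOpSemiNormedRing
  letI : NormedRing (Matrix (Fin k) (Fin k) ℝ) := Matrix.linftyOpNormedRing
  letI : NormedAlgebra ℝ (Matrix (Fin k) (Fin k) ℝ) := Matrix.linftyOpNormedAlgebra
  have h := NormedSpace.exp_series_hasSum_exp' (𝕂 := ℝ) N
  have hcont : Continuous fun M : Matrix (Fin k) (Fin k) ℝ => M i j := by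
    exact continuous_id.matrix_elem i j
  have h2 := h.map (AddMonoidHom.mk' (fun M : Matrix (Fin k) (Fin k) ℝ => M i j)
    (fun a b => rfl)) hcont
  refine h2.nonneg fun n => ?_
  simp only [Function.comp, AddMonoidHom.mk'_apply, Matrix.smul_apply, smul_eq_mul]
  exact mul_nonneg (by positivity) (aux_pow_entries_nonneg hN n i j)

lemma aux_exp_colsum_one {k : ℕ} {Q : Matrix (Fin k) (Fin k) ℝ}
    (hcol : ∀ j, ∑ i, Q i j = 0) (j : Fin k) : ∑ i, exp Q i j = 1 := by
  letI : SeminormedRing (Matrix (Fin k) (Fin k) ℝ) := Matrix.linftyOpSemiNormedRing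
  letI : NormedRing (Matrix (Fin k) (Fin k) ℝ) := Matrix.linftyOpNormedRing
  letI : NormedAlgebra ℝ (Matrix (Fin k) (Fin k) ℝ) := Matrix.linftyOpNormedAlgebra
  have h := NormedSpace.exp_series_hasSum_exp' (𝕂 := ℝ) Q
  have hcont : Continuous fun M : Matrix (Fin k) (Fin k) ℝ => ∑ i, M i j := by
    exact continuous_finset_sum _ fun i _ => continuous_id.matrix_elem i j
  have h2 := h.map (AddMonoidHom.mk' (fun M : Matrix (Fin k) (Fin k) ℝ => ∑ i, M i j)
    (fun a b => by simp [Finset.sum_add_distrib])) hcont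
  have hz : ∀ n : ℕ, ∑ i, (Q ^ (n + 1)) i j = 0 := by
    intro n
    simp_rw [pow_succ', Matrix.mul_apply]
    rw [Finset.sum_comm]
    simp [← Finset.sum_mul, hcol]
  have h4 : (⇑(AddMonoidHom.mk' (fun M : Matrix (Fin k) (Fin k) ℝ => ∑ i, M i j)
      (fun a b => by simp [Finset.sum_add_distrib])) ∘ fun n : ℕ => (n !⁻¹ : ℝ) • Q ^ n)
      = fun n : ℕ => if n = 0 then (1 : ℝ) else 0 := by
    funext n
    cases n with
    | zero => simp [Matrix.one_apply]
    | succ n =>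
      simp only [Function.comp_apply, AddMonoidHom.mk'_apply, Matrix.smul_apply, smul_eq_mul,
        ← Finset.mul_sum, hz n, mul_zero]
      simp
  rw [h4] at h2
  have h3 : HasSum (fun n : ℕ => if n = 0 then (1 : ℝ) else 0) 1 := hasSum_ite_eq 0 1
  have h5 := h2.unique h3
  simp at h5
  exact h5

lemma aux_exp_mul_eq {n₁ : Type*} [Fintype n₁] [DecidableEq n₁] {k : ℕ}
    (A : Matrix n₁ n₁ ℂ) (M : Matrix (Fin k) (Fin k) ℂ)
    (B : Fin k → Matrix n₁ n₁ ℂ)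
    (hAB : ∀ i, A * B i = ∑ j, M j i • B j) (i : Fin k) :
    exp A * B i = ∑ j, (exp M) j i • B j := by
  letI : SeminormedRing (Matrix n₁ n₁ ℂ) := Matrix.linftyOpSemiNormedRing
  letI : NormedRing (Matrix n₁ n₁ ℂ) := Matrix.linftyOpNormedRing
  letI : NormedAlgebra ℂ (Matrix n₁ n₁ ℂ) := Matrix.linftyOpNormedAlgebra
  letI : SeminormedRing (Matrix (Fin k) (Fin k) ℂ) := Matrix.linftyOpSemiNormedRing
  letI : NormedRing (Matrix (Fin k) (Fin k) ℂ) := Matrix.linftyOpNormedRing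
  letI : NormedAlgebra ℂ (Matrix (Fin k) (Fin k) ℂ) := Matrix.linftyOpNormedAlgebra
  have hpow : ∀ (n : ℕ) (i : Fin k), A ^ n * B i = ∑ j, (M ^ n) j i • B j := by
    intro n
    induction n with
    | zero =>
      intro i
      simp [Matrix.one_apply]
    | succ n ih =>
      intro i
      rw [pow_succ', mul_assoc, ih i, Finset.mul_sum]
      simp_rw [mul_smul_comm, hAB, Finset.smul_sum, smul_smul]
      rw [Finset.sum_comm]
      refine Finset.sum_congr rfl fun l _ => ?_
      rw [pow_succ', Matrix.mul_apply, Finset.sum_smul]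
      refine Finset.sum_congr rfl fun j _ => ?_
      rw [mul_comm]
  have hA := NormedSpace.exp_series_hasSum_exp' (𝕂 := ℂ) A
  have h1 := hA.map (AddMonoidHom.mulRight (B i)) (continuous_id.mul continuous_const)
  have hM := NormedSpace.exp_series_hasSum_exp' (𝕂 := ℂ) M
  have hcont : Continuous fun X : Matrix (Fin k) (Fin k) ℂ => ∑ j, X j i • B j := by
    exact continuous_finset_sum _ fun j _ => (continuous_id.matrix_elem j i).smul continuous_const
  have h2 := hM.map (AddMonoidHom.mk'
    (fun X : Matrix (Fin k) (Fin k) ℂ => ∑ j, X j i • B j)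
    (fun a b => by simp [add_smul, Finset.sum_add_distrib])) hcont
  have h4 : (⇑(AddMonoidHom.mulRight (B i)) ∘ fun n : ℕ => (n !⁻¹ : ℂ) • A ^ n)
      = (⇑(AddMonoidHom.mk' (fun X : Matrix (Fin k) (Fin k) ℂ => ∑ j, X j i • B j)
          (fun a b => by simp [add_smul, Finset.sum_add_distrib])) ∘
        fun n : ℕ => (n !⁻¹ : ℂ) • M ^ n) := by
    funext n
    simp only [Function.comp_apply, AddMonoidHom.mulRight_apply, AddMonoidHom.mk'_apply]
    rw [smul_mul_assoc, hpow n i, Finset.smul_sum]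
    simp [Matrix.smul_apply, smul_smul]
  rw [h4] at h1
  exact h1.unique h2

lemma aux_exp_map_ofReal {k : ℕ} (Q : Matrix (Fin k) (Fin k) ℝ) :
    (exp Q).map Complex.ofReal = exp (Q.map Complex.ofReal) := by
  letI : SeminormedRing (Matrix (Fin k) (Fin k) ℝ) := Matrix.linftyOpSemiNormedRing
  letI : NormedRing (Matrix (Fin k) (Fin k) ℝ) := Matrix.linftyOpNormedRing
  letI : NormedAlgebra ℝ (Matrix (Fin k) (Fin k) ℝ) := Matrix.linftyOpNormedAlgebra
  letI : SeminormedRing (Matrix (Fin k) (Fin k) ℂ) := Matrix.linftyOpSemiNormedRing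
  letI : NormedRing (Matrix (Fin k) (Fin k) ℂ) := Matrix.linftyOpNormedRing
  letI : NormedAlgebra ℝ (Matrix (Fin k) (Fin k) ℂ) := Matrix.linftyOpNormedAlgebra
  letI : NormedAlgebra ℚ (Matrix (Fin k) (Fin k) ℝ) := NormedAlgebra.restrictScalars ℚ ℝ _
  have h := NormedSpace.map_exp (Complex.ofRealHom.mapMatrix (m := Fin k))
    (by exact continuous_id.matrix_map Complex.continuous_ofReal) Q
  rw [RingHom.mapMatrix_apply, RingHom.mapMatrix_apply] at h
  exact h

/-- if `L ∘ E_i = Σ_j q_{ji} E_j` for a Q-matrix `Q` and linearly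
independent quantum channels `E_j`, and the identity map is a convex combination
`Σ_j λ_j E_j`, then `e^{tL} = Σ_j c_j(t) E_j` with the probability vector
`c(t) = e^{tQ} λ`; in particular `e^{tL}` stays in the convex hull of the `E_j`. -/
theorem qmatrix_semigroup_in_convex_hull
    {d k : ℕ} (hk : 1 ≤ k)
    (E : Fin k → (Matrix (Fin d) (Fin d) ℂ →ₗ[ℂ] Matrix (Fin d) (Fin d) ℂ))
    (hEind : LinearIndependent ℂ E)
    (hE : ∀ j, IsCPTP (E j))
    (L : Matrix (Fin d) (Fin d) ℂ →ₗ[ℂ] Matrix (Fin d) (Fin d) ℂ)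
    (Q : Matrix (Fin k) (Fin k) ℝ)
    (hoff : ∀ i j, i ≠ j → 0 ≤ Q i j)
    (hcol : ∀ j, ∑ i, Q i j = 0)
    (hLE : ∀ i, L ∘ₗ E i = ∑ j, (Q j i : ℂ) • E j)
    (lam : Fin k → ℝ) (hlam0 : ∀ j, 0 ≤ lam j) (hlam1 : ∑ j, lam j = 1)
    (hid : (LinearMap.id : Matrix (Fin d) (Fin d) ℂ →ₗ[ℂ] Matrix (Fin d) (Fin d) ℂ) =
      ∑ j, (lam j : ℂ) • E j) :
    ∀ t : ℝ, 0 ≤ t →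
      (∀ i, 0 ≤ (NormedSpace.exp (t • Q)).mulVec lam i) ∧
      (∑ i, (NormedSpace.exp (t • Q)).mulVec lam i = 1) ∧
      expL ((t : ℂ) • L) =
        ∑ j, (((NormedSpace.exp (t • Q)).mulVec lam j : ℝ) : ℂ) • E j := by
  intro t ht
  set c : ℝ := ∑ i, ∑ j, |Q i j| with hc
  have hcQ : ∀ i : Fin k, |Q i i| ≤ c := by
    intro i
    calc |Q i i| ≤ ∑ j, |Q i j| :=
          Finset.single_le_sum (f := fun j => |Q i j|) (fun j _ => abs_nonneg _)
            (Finset.mem_univ i)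
      _ ≤ c := Finset.single_le_sum (f := fun i => ∑ j, |Q i j|)
          (fun i _ => Finset.sum_nonneg fun j _ => abs_nonneg _) (Finset.mem_univ i)
  have hN : ∀ i j, 0 ≤ (t • Q + (t * c) • (1 : Matrix (Fin k) (Fin k) ℝ)) i j := by
    intro i j
    rcases eq_or_ne i j with rfl | hij
    · have h1 : -Q i i ≤ c := (neg_le_abs _).trans (hcQ i)
      simp only [Matrix.add_apply, Matrix.smul_apply, Matrix.one_apply_eq, smul_eq_mul, mul_one]
      nlinarith
    · simp only [Matrix.add_apply, Matrix.smul_apply, Matrix.one_apply_ne hij, smul_eq_mul,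
        mul_zero, add_zero]
      exact mul_nonneg ht (hoff i j hij)
  have hsplit : exp (t • Q)
      = Real.exp (-(t * c)) • exp (t • Q + (t * c) • (1 : Matrix (Fin k) (Fin k) ℝ)) := by
    letI : SeminormedRing (Matrix (Fin k) (Fin k) ℝ) := Matrix.linftyOpSemiNormedRing
    letI : NormedRing (Matrix (Fin k) (Fin k) ℝ) := Matrix.linftyOpNormedRing
    letI : NormedAlgebra ℝ (Matrix (Fin k) (Fin k) ℝ) := Matrix.linftyOpNormedAlgebra
    letI : NormedAlgebra ℚ (Matrix (Fin k) (Fin k) ℝ) := NormedAlgebra.restrictScalars ℚ ℝ _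
    have hcomm : Commute (t • Q + (t * c) • (1 : Matrix (Fin k) (Fin k) ℝ)) ((-(t * c)) • 1) :=
      (Commute.one_right _).smul_right _
    have hsum : t • Q
        = (t • Q + (t * c) • (1 : Matrix (Fin k) (Fin k) ℝ)) + (-(t * c)) • 1 := by
      rw [neg_smul]; abel
    conv_lhs => rw [hsum]
    rw [Matrix.exp_add_of_commute _ _ hcomm]
    have honem : exp ((-(t * c)) • (1 : Matrix (Fin k) (Fin k) ℝ))
        = Real.exp (-(t * c)) • 1 := by
      rw [show ((-(t * c)) • (1 : Matrix (Fin k) (Fin k) ℝ)) = algebraMap ℝ _ (-(t * c)) from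
        (Algebra.algebraMap_eq_smul_one _).symm]
      erw [← NormedSpace.algebraMap_exp_comm]
      rw [Real.exp_eq_exp_ℝ, Algebra.algebraMap_eq_smul_one]
    rw [honem, mul_smul_comm, mul_one]
  have hnn : ∀ i j, 0 ≤ exp (t • Q) i j := by
    intro i j
    rw [hsplit]
    simp only [Matrix.smul_apply, smul_eq_mul]
    exact mul_nonneg (Real.exp_nonneg _) (aux_exp_entries_nonneg hN i j)
  have hcolsum : ∀ j, ∑ i, exp (t • Q) i j = 1 := by
    refine aux_exp_colsum_one fun j => ?_
    simp [Matrix.smul_apply, smul_eq_mul, ← Finset.mul_sum, hcol j]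
  refine ⟨?_, ?_, ?_⟩
  · intro i
    simp only [Matrix.mulVec, dotProduct]
    exact Finset.sum_nonneg fun j _ => mul_nonneg (hnn i j) (hlam0 j)
  · simp only [Matrix.mulVec, dotProduct]
    rw [Finset.sum_comm]
    have hstep : ∀ j, ∑ i, exp (t • Q) i j * lam j = lam j := fun j => by
      rw [← Finset.sum_mul, hcolsum j, one_mul]
    simp_rw [hstep]
    exact hlam1
  · set b := Matrix.stdBasis ℂ (Fin d) (Fin d) with hb
    set A := LinearMap.toMatrix b b L with hA
    set B : Fin k → Matrix (Fin d × Fin d) (Fin d × Fin d) ℂ :=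
      fun j => LinearMap.toMatrix b b (E j) with hB
    have hABrel : ∀ i, ((t : ℂ) • A) * B i
        = ∑ j, ((t : ℂ) • Q.map Complex.ofReal) j i • B j := by
      intro i
      have h0 := congrArg (LinearMap.toMatrix b b) (hLE i)
      rw [LinearMap.toMatrix_comp b b b, map_sum] at h0
      simp_rw [map_smul] at h0
      rw [smul_mul_assoc, h0, Finset.smul_sum]
      refine Finset.sum_congr rfl fun j _ => ?_
      rw [smul_smul, Matrix.smul_apply, Matrix.map_apply, smul_eq_mul]
    have key : ∀ i, exp ((t : ℂ) • A) * B i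
        = ∑ j, (exp ((t : ℂ) • Q.map Complex.ofReal)) j i • B j :=
      aux_exp_mul_eq _ _ _ hABrel
    have hmapQ : (t : ℂ) • Q.map Complex.ofReal = (t • Q).map Complex.ofReal := by
      ext i j
      simp [Matrix.map_apply, Matrix.smul_apply, smul_eq_mul]
    have hexpQ : exp ((t : ℂ) • Q.map Complex.ofReal)
        = (exp (t • Q)).map Complex.ofReal := by
      rw [hmapQ, aux_exp_map_ofReal]
    have hone : (1 : Matrix (Fin d × Fin d) (Fin d × Fin d) ℂ) = ∑ i, (lam i : ℂ) • B i := by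
      have h0 := congrArg (LinearMap.toMatrix b b) hid
      rw [LinearMap.toMatrix_id, map_sum] at h0
      simp_rw [map_smul] at h0
      exact h0
    have hexp : exp ((t : ℂ) • A)
        = ∑ j, (((exp (t • Q)).mulVec lam j : ℝ) : ℂ) • B j := by
      calc exp ((t : ℂ) • A) = exp ((t : ℂ) • A) * 1 := (mul_one _).symm
        _ = ∑ i, (lam i : ℂ) • (exp ((t : ℂ) • A) * B i) := by
            rw [hone, Finset.mul_sum]; simp_rw [mul_smul_comm]
        _ = ∑ i, (lam i : ℂ) • ∑ j, ((exp (t • Q)).map Complex.ofReal) j i • B j := by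
            simp_rw [key, hexpQ]
        _ = ∑ j, (((exp (t • Q)).mulVec lam j : ℝ) : ℂ) • B j := by
            simp_rw [Finset.smul_sum, smul_smul]
            rw [Finset.sum_comm]
            refine Finset.sum_congr rfl fun j _ => ?_
            rw [← Finset.sum_smul]
            congr 1
            simp only [Matrix.map_apply, Matrix.mulVec, dotProduct]
            push_cast
            exact Finset.sum_congr rfl fun i _ => mul_comm _ _
    have hfinal : expL ((t : ℂ) • L)
        = Matrix.toLin b b (exp (LinearMap.toMatrix b b ((t : ℂ) • L))) := rfl
    rw [hfinal, map_smul, hexp, map_sum]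
    simp_rw [map_smul]
    refine Finset.sum_congr rfl fun j _ => ?_
    rw [hB, Matrix.toLin_toMatrix]
end
end

section
/- Let L : M_d(ℂ) → M_d(ℂ) be linear and let {U_g}_{g∈G} be a family of unitary matrices in M_d(ℂ) such that L(U_g X U_g†) = U_g L(X) U_g† for every g ∈ G and X ∈ M_d(ℂ). Then for every t ≥ 0 the Choi matrix J(e^{tL}) = Σ_{i,j} E_{ij} ⊗ e^{tL}(E_{ij}) commutes with Ū_g ⊗ U_g for every g ∈ G, where Ū_g denotes the entrywise complex conjugate of U_g. -/
open scoped Kronecker ComplexOrder Matrix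

noncomputable section

lemma choi_apply' {ι : Type*} [Fintype ι] [DecidableEq ι] {κ : Type*} [Fintype κ]
    (Φ : Matrix ι ι ℂ →ₗ[ℂ] Matrix κ κ ℂ) (i j : ι) (k l : κ) :
    choi Φ (i, k) (j, l) = Φ (Matrix.single i j 1) k l := by
  simp [choi, Matrix.sum_apply, Matrix.kroneckerMap_apply, Matrix.single,
    ite_and, Finset.sum_ite_eq, Finset.sum_ite_eq']

lemma std_mul_conjT {d : ℕ} (U : Matrix (Fin d) (Fin d) ℂ) (i p : Fin d) :
    Matrix.single i p (1 : ℂ) * Uᴴ =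
      ∑ j, (starRingEnd ℂ) (U j p) • Matrix.single i j (1 : ℂ) := by
  ext a b
  simp [Matrix.mul_apply, Matrix.sum_apply, Matrix.smul_apply, Matrix.single,
    Matrix.conjTranspose_apply, ite_and, Finset.sum_ite_eq, Finset.sum_ite_eq']

lemma conjT_mul_std {d : ℕ} (U : Matrix (Fin d) (Fin d) ℂ) (i p : Fin d) :
    Uᴴ * Matrix.single i p (1 : ℂ) =
      ∑ j, (starRingEnd ℂ) (U i j) • Matrix.single j p (1 : ℂ) := by
  ext a b
  simp [Matrix.mul_apply, Matrix.sum_apply, Matrix.smul_apply, Matrix.single,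
    Matrix.conjTranspose_apply, ite_and, Finset.sum_ite_eq, Finset.sum_ite_eq']

lemma expL_cov {d : ℕ} (Ug : Matrix (Fin d) (Fin d) ℂ)
    (L : Matrix (Fin d) (Fin d) ℂ →ₗ[ℂ] Matrix (Fin d) (Fin d) ℂ) (t : ℂ)
    (hcov : ∀ X, L (Ug * X * Ugᴴ) = Ug * L X * Ugᴴ) :
    ∀ X, expL (t • L) (Ug * X * Ugᴴ) = Ug * expL (t • L) X * Ugᴴ := by
  intro X
  set b := Matrix.stdBasis ℂ (Fin d) (Fin d)
  set C : Matrix (Fin d) (Fin d) ℂ →ₗ[ℂ] Matrix (Fin d) (Fin d) ℂ :=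
    (LinearMap.mulLeft ℂ Ug).comp (LinearMap.mulRight ℂ Ugᴴ) with hC
  have hcomm : Commute (LinearMap.toMatrix b b (t • L)) (LinearMap.toMatrix b b C) := by
    have h1 : (t • L) ∘ₗ C = C ∘ₗ (t • L) := by
      ext X : 1
      simp only [LinearMap.comp_apply, LinearMap.smul_apply, hC, LinearMap.mulLeft_apply,
        LinearMap.mulRight_apply, map_smul, smul_mul_assoc, mul_smul_comm]
      rw [← mul_assoc, hcov, mul_assoc]
    show _ = _
    rw [← LinearMap.toMatrix_comp b b b, ← LinearMap.toMatrix_comp b b b, h1]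
  have hexp : Commute (NormedSpace.exp (LinearMap.toMatrix b b (t • L)))
      (LinearMap.toMatrix b b C) := hcomm.exp_left
  have h2 : expL (t • L) ∘ₗ C = C ∘ₗ expL (t • L) := by
    have := congrArg (Matrix.toLin b b) hexp.eq
    rw [Matrix.toLin_mul b b b, Matrix.toLin_mul b b b, Matrix.toLin_toMatrix] at this
    exact this
  have := congrFun (congrArg DFunLike.coe h2) X
  simpa [hC, mul_assoc] using this

/-- if `L` is covariant with respect to a family of unitaries `U_g`, then
for every `t ≥ 0` the Choi matrix of `e^{tL}` commutes with `Ū_g ⊗ U_g`. -/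
theorem choi_of_semigroup_commutes
    {d : ℕ} {G : Type*} (U : G → Matrix (Fin d) (Fin d) ℂ)
    (hU : ∀ g, U g ∈ Matrix.unitaryGroup (Fin d) ℂ)
    (L : Matrix (Fin d) (Fin d) ℂ →ₗ[ℂ] Matrix (Fin d) (Fin d) ℂ)
    (hcov : ∀ (g : G) (X : Matrix (Fin d) (Fin d) ℂ),
      L (U g * X * (U g)ᴴ) = U g * L X * (U g)ᴴ) :
    ∀ t : ℝ, 0 ≤ t → ∀ g : G,
      choi (expL ((t : ℂ) • L)) * ((U g).map (starRingEnd ℂ) ⊗ₖ U g) =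
        ((U g).map (starRingEnd ℂ) ⊗ₖ U g) * choi (expL ((t : ℂ) • L)) := by
  intro t ht g
  set Φ := expL ((t : ℂ) • L) with hΦ
  have hΦcov : ∀ X, Φ (U g * X * (U g)ᴴ) = U g * Φ X * (U g)ᴴ :=
    expL_cov (U g) L t (hcov g)
  have hUU : U g * (U g)ᴴ = 1 := by
    have := (Matrix.mem_unitaryGroup_iff.mp (hU g))
    rwa [Matrix.star_eq_conjTranspose] at this
  have hUU' : (U g)ᴴ * U g = 1 := by
    have := (Matrix.mem_unitaryGroup_iff'.mp (hU g))
    rwa [Matrix.star_eq_conjTranspose] at this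
  -- key covariance identity
  have key : ∀ X, Φ (X * (U g)ᴴ) * U g = U g * Φ ((U g)ᴴ * X) := by
    intro X
    have h := hΦcov ((U g)ᴴ * X)
    rw [← mul_assoc, hUU, one_mul] at h
    rw [h, mul_assoc, hUU', mul_one]
  ext ⟨i, k⟩ ⟨p, q⟩
  rw [Matrix.mul_apply, Matrix.mul_apply]
  have e1 : Φ (Matrix.single i p 1 * (U g)ᴴ) =
      ∑ j, (starRingEnd ℂ) (U g j p) • Φ (Matrix.single i j 1) := by
    rw [std_mul_conjT, map_sum]; simp only [map_smul]
  have e2 : Φ ((U g)ᴴ * Matrix.single i p 1) =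
      ∑ j, (starRingEnd ℂ) (U g i j) • Φ (Matrix.single j p 1) := by
    rw [conjT_mul_std, map_sum]; simp only [map_smul]
  calc ∑ jl : Fin d × Fin d, choi Φ (i, k) jl * ((U g).map (starRingEnd ℂ) ⊗ₖ U g) jl (p, q)
      = (Φ (Matrix.single i p 1 * (U g)ᴴ) * U g) k q := by
        rw [e1]
        simp only [Fintype.sum_prod_type, choi_apply', Matrix.kroneckerMap_apply,
          Matrix.map_apply, Matrix.mul_apply, Matrix.sum_apply, Matrix.smul_apply,
          smul_eq_mul, Finset.sum_mul]
        rw [Finset.sum_comm]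
        exact Finset.sum_congr rfl fun j _ => Finset.sum_congr rfl fun l _ => by ring
    _ = (U g * Φ ((U g)ᴴ * Matrix.single i p 1)) k q := by rw [key]
    _ = ∑ jl : Fin d × Fin d, ((U g).map (starRingEnd ℂ) ⊗ₖ U g) (i, k) jl * choi Φ jl (p, q) := by
        rw [e2]
        simp only [Fintype.sum_prod_type, choi_apply', Matrix.kroneckerMap_apply,
          Matrix.map_apply, Matrix.mul_apply, Matrix.sum_apply, Matrix.smul_apply,
          smul_eq_mul, Finset.mul_sum]
        rw [Finset.sum_comm]
        exact Finset.sum_congr rfl fun j _ => Finset.sum_congr rfl fun l _ => by ring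
end
end

section
/- Let L be a Lindbladian on M_d(ℂ) and let {U_g}_{g∈G} be a family of unitary matrices in M_d(ℂ) whose commutant is trivial, i.e. every matrix A ∈ M_d(ℂ) satisfying A U_g = U_g A for all g ∈ G is a scalar multiple of the identity. Assume L is covariant: L(U_g X U_g†) = U_g L(X) U_g† for every g ∈ G and X ∈ M_d(ℂ). Then e^{tL}(I_d) = I_d for every t ≥ 0, and in particular L(I_d) = 0. -/
open scoped Kronecker ComplexOrder Matrix

noncomputable section

lemma exp_mulVec_fixed {n : Type*} [Fintype n] [DecidableEq n]
    (A : Matrix n n ℂ) (x : n → ℂ) (h : A *ᵥ x = 0) :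
    NormedSpace.exp A *ᵥ x = x := by
  letI : SeminormedRing (Matrix n n ℂ) := Matrix.linftyOpSemiNormedRing
  letI : NormedRing (Matrix n n ℂ) := Matrix.linftyOpNormedRing
  letI : NormedAlgebra ℂ (Matrix n n ℂ) := Matrix.linftyOpNormedAlgebra
  have hsum : Summable fun k : ℕ => ((k.factorial : ℂ)⁻¹) • A ^ k :=
    NormedSpace.expSeries_summable' A
  let f : Matrix n n ℂ →ₗ[ℂ] (n → ℂ) :=
    { toFun := fun B => B *ᵥ x
      map_add' := fun B C => Matrix.add_mulVec B C x
      map_smul' := fun c B => Matrix.smul_mulVec c B x }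
  have hpow : ∀ k : ℕ, k ≠ 0 → A ^ k *ᵥ x = 0 := by
    intro k hk
    obtain ⟨m, rfl⟩ := Nat.exists_eq_succ_of_ne_zero hk
    rw [pow_succ, ← Matrix.mulVec_mulVec, h, Matrix.mulVec_zero]
  calc NormedSpace.exp A *ᵥ x
      = f (∑' k : ℕ, ((k.factorial : ℂ)⁻¹) • A ^ k) := by
        rw [NormedSpace.exp_eq_tsum (𝕂 := ℂ)]; rfl
    _ = ∑' k : ℕ, f (((k.factorial : ℂ)⁻¹) • A ^ k) :=
        (f.toContinuousLinearMap).map_tsum hsum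
    _ = f (((0:ℕ).factorial : ℂ)⁻¹ • A ^ 0) := by
        refine tsum_eq_single 0 ?_
        intro k hk
        show ((k.factorial : ℂ)⁻¹ • A ^ k) *ᵥ x = 0
        rw [Matrix.smul_mulVec, hpow k hk, smul_zero]
    _ = x := by simp [f]

/-- a Lindbladian covariant with respect to a family of unitaries with
trivial commutant generates a unital semigroup: `e^{tL}(I) = I` for all `t ≥ 0`, and in
particular `L(I) = 0`. -/
theorem covariant_trivial_commutant_unital
    {d : ℕ} {G : Type*} (U : G → Matrix (Fin d) (Fin d) ℂ)
    (hU : ∀ g, U g ∈ Matrix.unitaryGroup (Fin d) ℂ)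
    (hcommutant : ∀ A : Matrix (Fin d) (Fin d) ℂ,
      (∀ g, A * U g = U g * A) → ∃ c : ℂ, A = c • (1 : Matrix (Fin d) (Fin d) ℂ))
    (L : Matrix (Fin d) (Fin d) ℂ →ₗ[ℂ] Matrix (Fin d) (Fin d) ℂ)
    (hLind : IsLindbladian L)
    (hcov : ∀ (g : G) (X : Matrix (Fin d) (Fin d) ℂ),
      L (U g * X * (U g)ᴴ) = U g * L X * (U g)ᴴ) :
    (∀ t : ℝ, 0 ≤ t → expL ((t : ℂ) • L) 1 = 1) ∧ L 1 = 0 := by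
  -- Step 1: L 1 commutes with every U g
  have hfix : ∀ g, U g * (1 : Matrix (Fin d) (Fin d) ℂ) * (U g)ᴴ = 1 := fun g => by
    rw [mul_one, ← Matrix.star_eq_conjTranspose]
    exact Matrix.mem_unitaryGroup_iff.mp (hU g)
  have hcomm : ∀ g, L 1 * U g = U g * L 1 := by
    intro g
    have h1 : L 1 = U g * L 1 * (U g)ᴴ := by
      conv_lhs => rw [← hfix g]
      rw [hcov g 1]
    have h2 : (U g)ᴴ * U g = 1 := by
      rw [← Matrix.star_eq_conjTranspose]
      exact Matrix.mem_unitaryGroup_iff'.mp (hU g)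
    calc L 1 * U g = U g * L 1 * (U g)ᴴ * U g := by rw [← h1]
      _ = U g * L 1 * ((U g)ᴴ * U g) := by rw [mul_assoc]
      _ = U g * L 1 := by rw [h2, mul_one]
  obtain ⟨c, hc⟩ := hcommutant (L 1) hcomm
  -- Step 2: the trace of L 1 vanishes
  have htr : (L 1).trace = 0 := by
    obtain ⟨J, H, γ, A, hH, hγ, hL⟩ := hLind
    rw [hL 1]
    simp only [mul_one, one_mul, sub_self, smul_zero, zero_add,
      Matrix.trace_sum, Matrix.trace_smul, Matrix.trace_sub, Matrix.trace_add]
    refine Finset.sum_eq_zero fun j _ => ?_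
    rw [Matrix.trace_mul_comm (A j) (A j)ᴴ]
    simp only [smul_eq_mul]
    ring
  -- Step 3: L 1 = 0
  have hL1 : L 1 = 0 := by
    rcases Nat.eq_zero_or_pos d with hd | hd
    · subst hd
      apply Subsingleton.elim
    · have : c * (d : ℂ) = 0 := by
        have := htr
        rw [hc, Matrix.trace_smul, Matrix.trace_one, smul_eq_mul] at this
        simpa using this
      have hd' : (d : ℂ) ≠ 0 := Nat.cast_ne_zero.mpr hd.ne'
      have hc0 : c = 0 := by
        rcases mul_eq_zero.mp this with h | h
        · exact h
        · exact absurd h hd'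
      rw [hc, hc0, zero_smul]
  refine ⟨?_, hL1⟩
  intro t ht
  -- Step 4: the exponential fixes 1
  set b := Matrix.stdBasis ℂ (Fin d) (Fin d) with hb
  set M := LinearMap.toMatrix b b ((t : ℂ) • L) with hM
  have hMv : M *ᵥ ⇑(b.repr 1) = 0 := by
    rw [hM, LinearMap.toMatrix_mulVec_repr]
    have : ((t : ℂ) • L) 1 = 0 := by
      rw [LinearMap.smul_apply, hL1, smul_zero]
    rw [this]
    simp
  have key : NormedSpace.exp M *ᵥ ⇑(b.repr 1) = ⇑(b.repr 1) :=
    exp_mulVec_fixed M _ hMv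
  have hrepr : ⇑(b.repr (expL ((t : ℂ) • L) 1)) = ⇑(b.repr 1) := by
    have h2 := LinearMap.toMatrix_mulVec_repr b b
      (Matrix.toLin b b (NormedSpace.exp M)) 1
    rw [LinearMap.toMatrix_toLin] at h2
    show ⇑(b.repr (Matrix.toLin b b (NormedSpace.exp M) 1)) = ⇑(b.repr 1)
    rw [← h2, key]
  exact b.repr.injective (DFunLike.coe_injective hrepr)
end
end

section
/- Let H ∈ M_d(ℂ) be Hermitian with spectral decomposition H = Σ_{j=1}^K λ_j Π_j, where λ_1, …, λ_K are the distinct eigenvalues of H and Π_1, …, Π_K are the corresponding orthogonal spectral projections (Π_j† = Π_j, Π_j Π_l = δ_{jl} Π_j, Σ_j Π_j = I_d). Then there exists a Hermitian-preserving, trace-preserving linear map P : M_d(ℂ) ⊗ M_K(ℂ) → M_d(ℂ) such that, for the family of pure density matrices π_t = (1/K)|π_t⟩⟨π_t| ∈ M_K(ℂ) with |π_t⟩ = Σ_{j=1}^K e^{iλ_j t} |j⟩, one has P(ρ ⊗ π_t) = e^{iHt} ρ e^{−iHt} for all ρ ∈ M_d(ℂ) and all t ∈ ℝ. -/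
open scoped Kronecker ComplexOrder Matrix

noncomputable section

lemma exp_spectral {d K : ℕ} (Pr : Fin K → Matrix (Fin d) (Fin d) ℂ)
    (hPrOrth : ∀ j l, Pr j * Pr l = if j = l then Pr j else 0)
    (hPrSum : ∑ j, Pr j = 1) (c : Fin K → ℂ) :
    NormedSpace.exp (∑ j, c j • Pr j) = ∑ j, Complex.exp (c j) • Pr j := by
  letI : SeminormedRing (Matrix (Fin d) (Fin d) ℂ) := Matrix.linftyOpSemiNormedRing
  letI : NormedRing (Matrix (Fin d) (Fin d) ℂ) := Matrix.linftyOpNormedRing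
  letI : NormedAlgebra ℂ (Matrix (Fin d) (Fin d) ℂ) := Matrix.linftyOpNormedAlgebra
  let φ : (Fin K → ℂ) →+* Matrix (Fin d) (Fin d) ℂ :=
    { toFun := fun c => ∑ j, c j • Pr j
      map_one' := by simp [hPrSum]
      map_zero' := by simp
      map_add' := by intro x y; simp [add_smul, Finset.sum_add_distrib]
      map_mul' := by
        intro x y
        show (∑ j, (x * y) j • Pr j) = (∑ j, x j • Pr j) * (∑ j, y j • Pr j)
        rw [Finset.sum_mul_sum]
        simp [smul_mul_assoc, mul_smul_comm, hPrOrth, smul_smul, Finset.sum_ite_eq, mul_comm] }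
  have hφ : Continuous φ := by
    simpa [φ] using continuous_finset_sum Finset.univ
      (fun j _ => ((continuous_apply j).smul continuous_const : Continuous fun x : Fin K → ℂ => x j • Pr j))
  have h1 : (∑ j, c j • Pr j) = φ c := rfl
  rw [h1]
  erw [← NormedSpace.map_exp φ hφ]
  rw [Pi.exp_def]
  simp [φ, Complex.exp_eq_exp_ℂ]

/-- block extraction map -/
def blkMap (d K : ℕ) (j l : Fin K) :
    Matrix (Fin d × Fin K) (Fin d × Fin K) ℂ →ₗ[ℂ] Matrix (Fin d) (Fin d) ℂ where
  toFun X := Matrix.of fun a b => X (a, j) (b, l)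
  map_add' _ _ := rfl
  map_smul' _ _ := rfl


/-- for Hermitian `H = Σ_j λ_j Π_j` with distinct eigenvalues `λ_j` and
orthogonal spectral projections `Π_j`, there is a Hermitian-preserving trace-preserving
map `P` which, with the pure program states
`π_t = (1/K)|π_t⟩⟨π_t|`, `|π_t⟩ = Σ_j e^{iλ_j t}|j⟩`, exactly programs the coherent
dynamics `ρ ↦ e^{iHt} ρ e^{−iHt}` for all real `t`. -/
theorem coherent_hptp_programming_protocol
    {d K : ℕ} (H : Matrix (Fin d) (Fin d) ℂ) (hH : H.IsHermitian)
    (lam : Fin K → ℝ) (hlam : Function.Injective lam)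
    (Pr : Fin K → Matrix (Fin d) (Fin d) ℂ)
    (hPrHerm : ∀ j, (Pr j)ᴴ = Pr j)
    (hPrOrth : ∀ j l, Pr j * Pr l = if j = l then Pr j else 0)
    (hPrNe : ∀ j, Pr j ≠ 0)
    (hPrSum : ∑ j, Pr j = 1)
    (hHdec : H = ∑ j, (lam j : ℂ) • Pr j) :
    ∃ P : Matrix (Fin d × Fin K) (Fin d × Fin K) ℂ →ₗ[ℂ] Matrix (Fin d) (Fin d) ℂ,
      (∀ X, P Xᴴ = (P X)ᴴ) ∧ (∀ X, (P X).trace = X.trace) ∧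
      ∀ (ρ : Matrix (Fin d) (Fin d) ℂ) (t : ℝ),
        P (ρ ⊗ₖ ((K : ℂ)⁻¹ •
            Matrix.vecMulVec (fun j => Complex.exp (Complex.I * (lam j : ℂ) * (t : ℂ)))
              (fun j => Complex.exp (-(Complex.I) * (lam j : ℂ) * (t : ℂ))))) =
          NormedSpace.exp ((Complex.I * (t : ℂ)) • H) * ρ *
            NormedSpace.exp ((-(Complex.I) * (t : ℂ)) • H) := by
  rcases Nat.eq_zero_or_pos d with hd | hd
  · subst hd
    refine ⟨0, ?_, ?_, ?_⟩
    · intro X; ext a b; exact a.elim0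
    · intro X; simp [Matrix.trace]
    · intro ρ t; ext a b; exact a.elim0
  have hd' : (d : ℂ) ≠ 0 := Nat.cast_ne_zero.mpr (by omega)
  have hK0 : K ≠ 0 := by
    rintro rfl
    simp only [Finset.univ_eq_empty, Finset.sum_empty] at hPrSum
    have h0 := congrFun (congrFun hPrSum ⟨0, hd⟩) ⟨0, hd⟩
    simp [Matrix.one_apply] at h0
  have hK' : (K : ℂ) ≠ 0 := Nat.cast_ne_zero.mpr hK0
  -- define P
  set σ : Matrix (Fin d) (Fin d) ℂ := (d : ℂ)⁻¹ • 1 with hσ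
  set main : Matrix (Fin d × Fin K) (Fin d × Fin K) ℂ →ₗ[ℂ] Matrix (Fin d) (Fin d) ℂ :=
    (K : ℂ) • ∑ j, ∑ l,
      (LinearMap.mulLeft ℂ (Pr j)).comp ((LinearMap.mulRight ℂ (Pr l)).comp (blkMap d K j l))
    with hmain
  set corr : Matrix (Fin d × Fin K) (Fin d × Fin K) ℂ →ₗ[ℂ] ℂ :=
    Matrix.traceLinearMap (Fin d × Fin K) ℂ ℂ - (K : ℂ) • ∑ j,
      (Matrix.traceLinearMap (Fin d) ℂ ℂ).comp
        ((LinearMap.mulLeft ℂ (Pr j)).comp (blkMap d K j j))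
    with hcorr
  set P : Matrix (Fin d × Fin K) (Fin d × Fin K) ℂ →ₗ[ℂ] Matrix (Fin d) (Fin d) ℂ :=
    main + (LinearMap.toSpanSingleton ℂ _ σ).comp corr with hP
  have hPapp : ∀ X, P X = (K : ℂ) • (∑ j, ∑ l, Pr j * ((blkMap d K j l X) * Pr l)) +
      (X.trace - (K : ℂ) * ∑ j, (Pr j * blkMap d K j j X).trace) • σ := by
    intro X
    simp [hP, hmain, hcorr, LinearMap.sum_apply, Finset.smul_sum, sub_smul, smul_smul,
      LinearMap.toSpanSingleton_apply, Finset.mul_sum]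
  have hblkH : ∀ (X : Matrix (Fin d × Fin K) (Fin d × Fin K) ℂ) j l,
      blkMap d K j l Xᴴ = (blkMap d K l j X)ᴴ := by
    intro X j l; ext a b; simp [blkMap, Matrix.conjTranspose_apply, ]; rfl
  refine ⟨P, ?_, ?_, ?_⟩
  · -- Hermitian preserving
    intro X
    rw [hPapp, hPapp]
    rw [Matrix.conjTranspose_add, Matrix.conjTranspose_smul, Matrix.conjTranspose_smul]
    have hσH : σᴴ = σ := by
      simp [hσ, Matrix.conjTranspose_smul, Complex.conj_inv]
    congr 1
    · rw [Matrix.conjTranspose_sum]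
      rw [Finset.sum_comm]
      simp only [Matrix.conjTranspose_sum, Matrix.conjTranspose_mul, hPrHerm, hblkH]
      congr 1
      · simp
      · exact Finset.sum_congr rfl fun j _ => Finset.sum_congr rfl fun l _ => by
          rw [mul_assoc]
    · rw [hσH]
      congr 1
      have hstar : ∀ (j : Fin K) (B : Matrix (Fin d) (Fin d) ℂ),
          (Pr j * Bᴴ).trace = star (Pr j * B).trace := by
        intro j B
        calc (Pr j * Bᴴ).trace = ((B * Pr j)ᴴ).trace := by
              rw [Matrix.conjTranspose_mul, hPrHerm]
          _ = star (B * Pr j).trace := Matrix.trace_conjTranspose _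
          _ = star (Pr j * B).trace := by rw [Matrix.trace_mul_comm]
      simp only [hblkH, hstar, Matrix.trace_conjTranspose, star_sub, star_mul',
        star_natCast, star_sum]
  · -- trace preserving
    intro X
    rw [hPapp]
    rw [Matrix.trace_add, Matrix.trace_smul, Matrix.trace_smul]
    have htrσ : σ.trace = 1 := by
      simp [hσ, Matrix.trace_smul, Matrix.trace_one]
      field_simp
    rw [htrσ]
    have h1 : ∀ j l, (Pr j * (blkMap d K j l X * Pr l)).trace =
        if l = j then (Pr j * blkMap d K j j X).trace else 0 := by
      intro j l
      rw [← mul_assoc, Matrix.trace_mul_comm, ← mul_assoc, hPrOrth]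
      by_cases h : l = j
      · subst h; simp
      · simp [h]
    rw [Matrix.trace_sum]
    simp only [Matrix.trace_sum, h1]
    simp only [Finset.sum_ite_eq', Finset.mem_univ, if_true, smul_eq_mul]
    ring
  · -- programming equation
    intro ρ t
    have hexp : ∀ z : ℂ, NormedSpace.exp (z • H) = ∑ j, Complex.exp (z * lam j) • Pr j := by
      intro z
      have : z • H = ∑ j, (z * lam j) • Pr j := by
        rw [hHdec, Finset.smul_sum]
        exact Finset.sum_congr rfl fun j _ => smul_smul z _ _
      rw [this, exp_spectral Pr hPrOrth hPrSum]
    rw [hexp, hexp]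
    set f : Fin K → ℂ := fun j => Complex.exp (Complex.I * (lam j : ℂ) * (t : ℂ)) with hf
    set g : Fin K → ℂ := fun j => Complex.exp (-(Complex.I) * (lam j : ℂ) * (t : ℂ)) with hg
    have hfg : ∀ j, f j * g j = 1 := by
      intro j
      rw [hf, hg, ← Complex.exp_add]
      ring_nf
      exact Complex.exp_zero
    have hblkK : ∀ j l, blkMap d K j l (ρ ⊗ₖ ((K : ℂ)⁻¹ • Matrix.vecMulVec f g)) =
        ((K : ℂ)⁻¹ * (f j * g l)) • ρ := by
      intro j l
      ext a b
      simp [blkMap, Matrix.kronecker_apply, Matrix.vecMulVec_apply, Matrix.smul_apply]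
      change ρ a b * ((K : ℂ)⁻¹ * (f j * g l)) = (K : ℂ)⁻¹ * (f j * g l) * ρ a b
      ring
    rw [hPapp]
    simp only [hblkK]
    have htr : (ρ ⊗ₖ ((K : ℂ)⁻¹ • Matrix.vecMulVec f g)).trace = ρ.trace := by
      rw [Matrix.trace_kronecker, Matrix.trace_smul]
      have : (Matrix.vecMulVec f g).trace = (K : ℂ) := by
        simp [Matrix.trace, Matrix.diag, Matrix.vecMulVec_apply, hfg]
      rw [this]
      rw [smul_eq_mul, inv_mul_cancel₀ hK', mul_one]
    have hcorr0 : (ρ ⊗ₖ ((K : ℂ)⁻¹ • Matrix.vecMulVec f g)).trace -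
        (K : ℂ) * ∑ j, (Pr j * ((K : ℂ)⁻¹ * (f j * g j)) • ρ).trace = 0 := by
      rw [htr]
      simp only [hfg, mul_one]
      simp only [Matrix.mul_smul, Matrix.trace_smul, smul_eq_mul]
      rw [← Finset.mul_sum, ← mul_assoc, mul_inv_cancel₀ hK', one_mul]
      rw [sub_eq_zero]
      rw [← Matrix.trace_sum]
      congr 1
      rw [← Finset.sum_mul, hPrSum, one_mul]
    rw [hcorr0, zero_smul, add_zero]
    have hL : (K : ℂ) • (∑ j, ∑ l, Pr j * (((K : ℂ)⁻¹ * (f j * g l)) • ρ * Pr l))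
        = ∑ j, ∑ l, (f j * g l) • (Pr j * ρ * Pr l) := by
      rw [Finset.smul_sum]
      refine Finset.sum_congr rfl fun j _ => ?_
      rw [Finset.smul_sum]
      refine Finset.sum_congr rfl fun l _ => ?_
      rw [Matrix.smul_mul, Matrix.mul_smul, smul_smul, ← mul_assoc,
        mul_inv_cancel₀ hK', one_mul, ← mul_assoc]
    have hR : (∑ j, Complex.exp (Complex.I * (t : ℂ) * (lam j : ℂ)) • Pr j) * ρ *
          (∑ l, Complex.exp (-(Complex.I) * (t : ℂ) * (lam l : ℂ)) • Pr l)
        = ∑ j, ∑ l, (f j * g l) • (Pr j * ρ * Pr l) := by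
      rw [Finset.sum_mul, Finset.sum_mul]
      refine Finset.sum_congr rfl fun j _ => ?_
      rw [Finset.mul_sum]
      refine Finset.sum_congr rfl fun l _ => ?_
      rw [smul_mul_assoc, smul_mul_assoc, mul_smul_comm, smul_smul, mul_assoc]
      congr 1
      simp only [hf, hg]
      ring_nf
    rw [hL, hR]
end
end
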